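/- Let H be a Hopf algebra over a field k and R a commutative k-algebra. If σ and τ are convolution-invertible normalized lazy left 2-cocycles of H with coefficients in R, then their convolution product σ * τ is again a convolution-invertible normalized lazy left 2-cocycle; in particular the set Z²_ℓ(H,R) of convolution-invertible normalized lazy left 2-cocycles is a group under the convolution product. -/

import Mathlib

open TensorProduct

section LazyCocycles

variable (k : Type*) [Field k] (H : Type*) [Ring H] [HopfAlgebra k H]
variable (R : Type*) [CommRing R] [Algebra k R]

/-- The convolution product of linear maps `H ⊗ H → R`, where `H ⊗ H` carries
the tensor-product coalgebra structure:
`(σ * τ)(x ⊗ y) = σ(x₁ ⊗ y₁) τ(x₂ ⊗ y₂)`. -/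
noncomputable def conv2 (σ τ : H ⊗[k] H →ₗ[k] R) : H ⊗[k] H →ₗ[k] R :=
  LinearMap.mul' k R ∘ₗ TensorProduct.map σ τ ∘ₗ
    Coalgebra.comul (R := k) (A := H ⊗[k] H)

/-- The unit `η_R ∘ ε_{H⊗H}` of the convolution monoid. -/
noncomputable def convUnit2 : H ⊗[k] H →ₗ[k] R :=
  Algebra.linearMap k R ∘ₗ Coalgebra.counit (R := k) (A := H ⊗[k] H)

/-- Convolution invertibility for maps `H ⊗ H → R`. -/
def IsConvInvertible2 (σ : H ⊗[k] H →ₗ[k] R) : Prop :=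
  ∃ σ' : H ⊗[k] H →ₗ[k] R,
    conv2 k H R σ σ' = convUnit2 k H R ∧ conv2 k H R σ' σ = convUnit2 k H R

/-- `σ` is normalized: `σ(x ⊗ 1) = ε(x)·1_R = σ(1 ⊗ x)`. -/
def IsNormalized2 (σ : H ⊗[k] H →ₗ[k] R) : Prop :=
  (∀ x : H, σ (x ⊗ₜ[k] (1 : H)) = algebraMap k R (Coalgebra.counit (R := k) x)) ∧
  (∀ x : H, σ ((1 : H) ⊗ₜ[k] x) = algebraMap k R (Coalgebra.counit (R := k) x))

/-- `σ` is lazy: `σ(x₁ ⊗ y₁) ⊗ x₂y₂ = σ(x₂ ⊗ y₂) ⊗ x₁y₁` in `R ⊗ H`. -/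
def IsLazy2 (σ : H ⊗[k] H →ₗ[k] R) : Prop :=
  ∀ x y : H,
    TensorProduct.map σ (LinearMap.mul' k H)
        (Coalgebra.comul (R := k) (x ⊗ₜ[k] y))
      = TensorProduct.map σ (LinearMap.mul' k H)
          ((TensorProduct.comm k (H ⊗[k] H) (H ⊗[k] H))
            (Coalgebra.comul (R := k) (x ⊗ₜ[k] y)))

/-- The linear map `(x ⊗ y) ⊗ z ↦ σ(x₁ ⊗ y₁) σ(x₂y₂ ⊗ z)`. -/
noncomputable def cocycleLHS (σ : H ⊗[k] H →ₗ[k] R) :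
    (H ⊗[k] H) ⊗[k] H →ₗ[k] R :=
  LinearMap.mul' k R ∘ₗ
    TensorProduct.map σ
      (σ ∘ₗ TensorProduct.map (LinearMap.mul' k H) (LinearMap.id : H →ₗ[k] H)) ∘ₗ
    (TensorProduct.assoc k (H ⊗[k] H) (H ⊗[k] H) H).toLinearMap ∘ₗ
    TensorProduct.map (Coalgebra.comul (R := k) (A := H ⊗[k] H))
      (LinearMap.id : H →ₗ[k] H)

/-- The linear map `x ⊗ (y ⊗ z) ↦ σ(y₁ ⊗ z₁) σ(x ⊗ y₂z₂)`. -/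
noncomputable def cocycleRHS (σ : H ⊗[k] H →ₗ[k] R) :
    H ⊗[k] (H ⊗[k] H) →ₗ[k] R :=
  LinearMap.mul' k R ∘ₗ
    TensorProduct.map σ
      (σ ∘ₗ TensorProduct.map (LinearMap.id : H →ₗ[k] H) (LinearMap.mul' k H)) ∘ₗ
    (TensorProduct.leftComm k H (H ⊗[k] H) (H ⊗[k] H)).toLinearMap ∘ₗ
    TensorProduct.map (LinearMap.id : H →ₗ[k] H)
      (Coalgebra.comul (R := k) (A := H ⊗[k] H))

/-- `σ` is a left 2-cocycle:
`σ(x₁ ⊗ y₁) σ(x₂y₂ ⊗ z) = σ(y₁ ⊗ z₁) σ(x ⊗ y₂z₂)` for all `x, y, z ∈ H`. -/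
def IsCocycle (σ : H ⊗[k] H →ₗ[k] R) : Prop :=
  ∀ x y z : H,
    cocycleLHS k H R σ ((x ⊗ₜ[k] y) ⊗ₜ[k] z)
      = cocycleRHS k H R σ (x ⊗ₜ[k] (y ⊗ₜ[k] z))

/-- Membership in `Z²_ℓ(H,R)`: convolution-invertible normalized lazy left
2-cocycles. -/
def MemZ2ℓ (σ : H ⊗[k] H →ₗ[k] R) : Prop :=
  IsConvInvertible2 k H R σ ∧ IsNormalized2 k H R σ ∧ IsLazy2 k H R σ ∧
    IsCocycle k H R σ

/-!
Everything happens in convolution monoids `WithConv (C →ₗ A)`, where precomposition with a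
coalgebra map and postcomposition with an algebra map are monoid homomorphisms. In these terms
`σ` is normalized iff its pullbacks along `x ↦ x ⊗ 1` and `x ↦ 1 ⊗ x` are the unit, and lazy iff
`σ(-) ⊗ 1` commutes with `1 ⊗ μ(-)` in the convolution monoid of maps `H ⊗ H → R ⊗ H`; both
conditions are then visibly stable under products and inverses. The cocycle identity reads
`σ₁ * σ₁₂ = σ₂ * σ₂₃` for the pullbacks of `σ` along the four coalgebra maps
`H ⊗ H ⊗ H → H ⊗ H` sending `x ⊗ y ⊗ z` to `ε(z) x ⊗ y`, `xy ⊗ z`, `ε(x) y ⊗ z` and `x ⊗ yz`.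
Laziness of `τ` makes `τ₁` commute with `σ₁₂` and `τ₂` with `σ₂₃`, which is exactly what is
needed to regroup `(στ)₁ (στ)₁₂ = σ₁ σ₁₂ τ₁ τ₁₂`; for the inverse one inverts both sides of the
identity and uses laziness of the inverse.
-/

open WithConv Coalgebra

section ConvolutionHoms

variable {S C D E A B : Type*} [CommSemiring S] [AddCommMonoid C] [Module S C] [Coalgebra S C]
  [AddCommMonoid D] [Module S D] [Coalgebra S D] [AddCommMonoid E] [Module S E] [Coalgebra S E]
  [Semiring A] [Algebra S A] [Semiring B] [Algebra S B]

noncomputable def CoalgHom.precompConv (e : C →ₗc[S] D) :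
    WithConv (D →ₗ[S] A) →* WithConv (C →ₗ[S] A) where
  toFun f := toConv (f.ofConv ∘ₗ e.toLinearMap)
  map_one' := by ext; simp
  map_mul' f g := WithConv.ext (LinearMap.convMul_comp_coalgHom_distrib f g e)

lemma CoalgHom.precompConv_comp (g : D →ₗc[S] E) (e : C →ₗc[S] D) (f : WithConv (E →ₗ[S] A)) :
    (g.comp e).precompConv f = e.precompConv (g.precompConv f) := rfl

noncomputable def AlgHom.postcompConv (h : A →ₐ[S] B) :
    WithConv (C →ₗ[S] A) →* WithConv (C →ₗ[S] B) where
  toFun f := toConv (h.toLinearMap ∘ₗ f.ofConv)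
  map_one' := by ext; simp
  map_mul' f g := WithConv.ext (LinearMap.algHom_comp_convMul_distrib h f g)

end ConvolutionHoms

namespace Coalgebra.TensorProduct

section Projections

variable (S C D : Type*) [CommSemiring S] [AddCommMonoid C] [Module S C] [Coalgebra S C]
  [AddCommMonoid D] [Module S D] [Coalgebra S D]

noncomputable def fst : C ⊗[S] D →ₗc[S] C :=
  (Coalgebra.TensorProduct.rid S S C : C ⊗[S] S →ₗc[S] C).comp
    (map (CoalgHom.id S C) (counitCoalgHom S D))

noncomputable def snd : D ⊗[S] C →ₗc[S] C :=
  (Coalgebra.TensorProduct.lid S C : S ⊗[S] C →ₗc[S] C).comp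
    (map (counitCoalgHom S D) (CoalgHom.id S C))

variable {S C D}

@[simp]
lemma fst_tmul (c : C) (d : D) : fst S C D (c ⊗ₜ d) = counit (R := S) d • c := rfl

@[simp]
lemma snd_tmul (d : D) (c : C) : snd S C D (d ⊗ₜ c) = counit (R := S) d • c := rfl

lemma _root_.Coalgebra.lid_rTensor_counit_comul (d : D) :
    _root_.TensorProduct.lid S D ((counit (R := S) (A := D)).rTensor D (comul d)) = d := by
  rw [rTensor_counit_comul, _root_.TensorProduct.lid_tmul, one_smul]

lemma _root_.Coalgebra.rid_lTensor_counit_comul (d : D) :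
    _root_.TensorProduct.rid S D ((counit (R := S) (A := D)).lTensor D (comul d)) = d := by
  rw [lTensor_counit_comul, _root_.TensorProduct.rid_tmul, one_smul]

open _root_.TensorProduct (tmul_add add_tmul tmul_smul smul_tmul smul_tmul')

lemma map_fst_id_comp_comul :
    _root_.TensorProduct.map (fst S C D : C ⊗[S] D →ₗ[S] C) LinearMap.id ∘ₗ
        comul (R := S) (A := C ⊗[S] D) =
      (_root_.TensorProduct.assoc S C C D).toLinearMap ∘ₗ (comul (R := S) (A := C)).rTensor D := by
  refine _root_.TensorProduct.ext' fun c d => ?_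
  conv_rhs => rw [← lid_rTensor_counit_comul (S := S) d]
  simp only [LinearMap.comp_apply, _root_.TensorProduct.comul_tmul, LinearMap.rTensor_tmul]
  induction comul (R := S) c using _root_.TensorProduct.induction_on with
  | zero => simp
  | add t t' ht ht' => simp [add_tmul, ht, ht']
  | tmul c₁ c₂ =>
    induction comul (R := S) d using _root_.TensorProduct.induction_on with
    | zero => simp
    | add u u' hu hu' => simp [tmul_add, hu, hu']
    | tmul d₁ d₂ => simp [tmul_smul, smul_tmul']

lemma map_id_fst_comp_comul :
    _root_.TensorProduct.map LinearMap.id (fst S C D : C ⊗[S] D →ₗ[S] C) ∘ₗ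
        comul (R := S) (A := C ⊗[S] D) =
      (_root_.TensorProduct.rightComm S C C D).toLinearMap ∘ₗ
        (comul (R := S) (A := C)).rTensor D := by
  refine _root_.TensorProduct.ext' fun c d => ?_
  conv_rhs => rw [← rid_lTensor_counit_comul (S := S) d]
  simp only [LinearMap.comp_apply, _root_.TensorProduct.comul_tmul, LinearMap.rTensor_tmul]
  induction comul (R := S) c using _root_.TensorProduct.induction_on with
  | zero => simp
  | add t t' ht ht' => simp [add_tmul, ht, ht']
  | tmul c₁ c₂ =>
    induction comul (R := S) d using _root_.TensorProduct.induction_on with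
    | zero => simp
    | add u u' hu hu' => simp [tmul_add, hu, hu']
    | tmul d₁ d₂ => simp [tmul_smul, smul_tmul']

lemma map_snd_id_comp_comul :
    _root_.TensorProduct.map (snd S C D : D ⊗[S] C →ₗ[S] C) LinearMap.id ∘ₗ
        comul (R := S) (A := D ⊗[S] C) =
      (_root_.TensorProduct.leftComm S D C C).toLinearMap ∘ₗ
        (comul (R := S) (A := C)).lTensor D := by
  refine _root_.TensorProduct.ext' fun d c => ?_
  conv_rhs => rw [← lid_rTensor_counit_comul (S := S) d]
  simp only [LinearMap.comp_apply, _root_.TensorProduct.comul_tmul, LinearMap.lTensor_tmul]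
  induction comul (R := S) c using _root_.TensorProduct.induction_on with
  | zero => simp
  | add t t' ht ht' => simp [tmul_add, ht, ht']
  | tmul c₁ c₂ =>
    induction comul (R := S) d using _root_.TensorProduct.induction_on with
    | zero => simp
    | add u u' hu hu' => simp [add_tmul, hu, hu']
    | tmul d₁ d₂ =>
      simp
      rw [smul_tmul, smul_tmul']

lemma map_id_snd_comp_comul :
    _root_.TensorProduct.map LinearMap.id (snd S C D : D ⊗[S] C →ₗ[S] C) ∘ₗ
        comul (R := S) (A := D ⊗[S] C) =
      (_root_.TensorProduct.assoc S D C C).symm.toLinearMap ∘ₗ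
        (comul (R := S) (A := C)).lTensor D := by
  refine _root_.TensorProduct.ext' fun d c => ?_
  conv_rhs => rw [← rid_lTensor_counit_comul (S := S) d]
  simp only [LinearMap.comp_apply, _root_.TensorProduct.comul_tmul, LinearMap.lTensor_tmul]
  induction comul (R := S) c using _root_.TensorProduct.induction_on with
  | zero => simp
  | add t t' ht ht' => simp [tmul_add, ht, ht']
  | tmul c₁ c₂ =>
    induction comul (R := S) d using _root_.TensorProduct.induction_on with
    | zero => simp
    | add u u' hu hu' => simp [add_tmul, hu, hu']
    | tmul d₁ d₂ => simp [tmul_smul, smul_tmul']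

end Projections

section ConvolutionWithProjections

variable {S C D A : Type*} [CommSemiring S] [AddCommMonoid C] [Module S C] [Coalgebra S C]
  [AddCommMonoid D] [Module S D] [Coalgebra S D] [Semiring A] [Algebra S A] (f : C →ₗ[S] A)

lemma fst_precompConv_mul (G : C ⊗[S] D →ₗ[S] A) :
    ((fst S C D).precompConv (toConv f) * toConv G).ofConv =
      LinearMap.mul' S A ∘ₗ _root_.TensorProduct.map f G ∘ₗ
        (_root_.TensorProduct.assoc S C C D).toLinearMap ∘ₗ
          (comul (R := S) (A := C)).rTensor D := by
  rw [← map_fst_id_comp_comul]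
  simp only [← LinearMap.comp_assoc, ← _root_.TensorProduct.map_comp, LinearMap.comp_id]
  rfl

lemma mul_fst_precompConv (G : C ⊗[S] D →ₗ[S] A) :
    (toConv G * (fst S C D).precompConv (toConv f)).ofConv =
      LinearMap.mul' S A ∘ₗ _root_.TensorProduct.map G f ∘ₗ
        (_root_.TensorProduct.rightComm S C C D).toLinearMap ∘ₗ
          (comul (R := S) (A := C)).rTensor D := by
  rw [← map_id_fst_comp_comul]
  simp only [← LinearMap.comp_assoc, ← _root_.TensorProduct.map_comp, LinearMap.comp_id]
  rfl

lemma snd_precompConv_mul (G : D ⊗[S] C →ₗ[S] A) :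
    ((snd S C D).precompConv (toConv f) * toConv G).ofConv =
      LinearMap.mul' S A ∘ₗ _root_.TensorProduct.map f G ∘ₗ
        (_root_.TensorProduct.leftComm S D C C).toLinearMap ∘ₗ
          (comul (R := S) (A := C)).lTensor D := by
  rw [← map_snd_id_comp_comul]
  simp only [← LinearMap.comp_assoc, ← _root_.TensorProduct.map_comp, LinearMap.comp_id]
  rfl

lemma mul_snd_precompConv (G : D ⊗[S] C →ₗ[S] A) :
    (toConv G * (snd S C D).precompConv (toConv f)).ofConv =
      LinearMap.mul' S A ∘ₗ _root_.TensorProduct.map G f ∘ₗ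
        (_root_.TensorProduct.assoc S D C C).symm.toLinearMap ∘ₗ
          (comul (R := S) (A := C)).lTensor D := by
  rw [← map_id_snd_comp_comul]
  simp only [← LinearMap.comp_assoc, ← _root_.TensorProduct.map_comp, LinearMap.comp_id]
  rfl

end ConvolutionWithProjections

end Coalgebra.TensorProduct

section BialgebraCoalgHoms

variable (S B : Type*) [CommSemiring S] [Semiring B] [Bialgebra S B]

open Bialgebra

noncomputable def Bialgebra.includeLeftCoalgHom : B →ₗc[S] B ⊗[S] B :=
  (Coalgebra.TensorProduct.map (CoalgHom.id S B) (unitBialgHom S B).toCoalgHom).comp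
    (Coalgebra.TensorProduct.rid S S B).symm.toCoalgHom

noncomputable def Bialgebra.includeRightCoalgHom : B →ₗc[S] B ⊗[S] B :=
  (Coalgebra.TensorProduct.map (unitBialgHom S B).toCoalgHom (CoalgHom.id S B)).comp
    (Coalgebra.TensorProduct.lid S B).symm.toCoalgHom

noncomputable def Bialgebra.mulFirstTwo : (B ⊗[S] B) ⊗[S] B →ₗc[S] B ⊗[S] B :=
  Coalgebra.TensorProduct.map (mulCoalgHom S B) (CoalgHom.id S B)

noncomputable def Bialgebra.mulLastTwo : B ⊗[S] (B ⊗[S] B) →ₗc[S] B ⊗[S] B :=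
  Coalgebra.TensorProduct.map (CoalgHom.id S B) (mulCoalgHom S B)

variable {S B}

@[simp]
lemma Bialgebra.includeLeftCoalgHom_apply (x : B) : includeLeftCoalgHom S B x = x ⊗ₜ 1 := by
  simp [includeLeftCoalgHom, BialgHom.toCoalgHom_apply]

@[simp]
lemma Bialgebra.includeRightCoalgHom_apply (x : B) : includeRightCoalgHom S B x = 1 ⊗ₜ x := by
  simp [includeRightCoalgHom, BialgHom.toCoalgHom_apply]

end BialgebraCoalgHoms

section CocycleEquation

variable {M N F : Type*} [Monoid M] [Monoid N] [FunLike F M N] [MonoidHomClass F M N]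
  (φ₁ φ₁₂ φ₂ φ₂₃ : F)

lemma cocycle_equation_mul {a b : M}
    (ha : φ₁ a * φ₁₂ a = φ₂ a * φ₂₃ a) (hb : φ₁ b * φ₁₂ b = φ₂ b * φ₂₃ b)
    (h₁ : Commute (φ₁ b) (φ₁₂ a)) (h₂ : Commute (φ₂ b) (φ₂₃ a)) :
    φ₁ (a * b) * φ₁₂ (a * b) = φ₂ (a * b) * φ₂₃ (a * b) := by
  simp only [map_mul]
  rw [h₁.mul_mul_mul_comm, ha, hb, ← h₂.mul_mul_mul_comm]

lemma cocycle_equation_of_mul_eq_one {a a' : M}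
    (ha : φ₁ a * φ₁₂ a = φ₂ a * φ₂₃ a) (h : a * a' = 1) (h' : a' * a = 1)
    (h₁ : Commute (φ₁ a') (φ₁₂ a')) (h₂ : Commute (φ₂ a') (φ₂₃ a')) :
    φ₁ a' * φ₁₂ a' = φ₂ a' * φ₂₃ a' := by
  rw [h₁.eq, h₂.eq]
  refine left_inv_eq_right_inv (a := φ₁ a * φ₁₂ a) ?_ ?_
  · rw [mul_assoc, ← mul_assoc (φ₁ a'), ← map_mul, h', map_one, one_mul, ← map_mul, h', map_one]
  · rw [ha, mul_assoc, ← mul_assoc (φ₂₃ a), ← map_mul, h, map_one, one_mul, ← map_mul, h,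
      map_one]

end CocycleEquation

section LazyCocycleCriteria

variable {k H R}

open Coalgebra.TensorProduct (fst snd fst_precompConv_mul mul_fst_precompConv snd_precompConv_mul
  mul_snd_precompConv)
open Bialgebra (includeLeftCoalgHom includeRightCoalgHom mulFirstTwo mulLastTwo)

lemma conv2_eq (σ τ : H ⊗[k] H →ₗ[k] R) :
    conv2 k H R σ τ = (toConv σ * toConv τ).ofConv := rfl

lemma convUnit2_eq : convUnit2 k H R = (1 : WithConv (H ⊗[k] H →ₗ[k] R)).ofConv := rfl

lemma isConvInvertible2_iff_isUnit (σ : H ⊗[k] H →ₗ[k] R) :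
    IsConvInvertible2 k H R σ ↔ IsUnit (toConv σ) := by
  rw [isUnit_iff_exists]
  constructor
  · rintro ⟨σ', h, h'⟩
    exact ⟨toConv σ', WithConv.ext h, WithConv.ext h'⟩
  · rintro ⟨σ', h, h'⟩
    exact ⟨σ'.ofConv, congrArg ofConv h, congrArg ofConv h'⟩

lemma isNormalized2_iff (σ : H ⊗[k] H →ₗ[k] R) :
    IsNormalized2 k H R σ ↔
      (includeLeftCoalgHom k H).precompConv (toConv σ) = 1 ∧
        (includeRightCoalgHom k H).precompConv (toConv σ) = 1 := by
  simp [IsNormalized2, CoalgHom.precompConv, WithConv.ext_iff, LinearMap.ext_iff]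

lemma isNormalized2_conv2 {σ τ : H ⊗[k] H →ₗ[k] R} (hσ : IsNormalized2 k H R σ)
    (hτ : IsNormalized2 k H R τ) : IsNormalized2 k H R (conv2 k H R σ τ) := by
  rw [isNormalized2_iff] at hσ hτ ⊢
  simp only [conv2_eq, toConv_ofConv, map_mul, hσ, hτ, mul_one, and_self]

lemma isNormalized2_convUnit2 : IsNormalized2 k H R (convUnit2 k H R) := by
  simp only [isNormalized2_iff, convUnit2_eq, toConv_ofConv, map_one, and_self]

lemma isNormalized2_of_conv2_eq_convUnit2 {σ σ' : H ⊗[k] H →ₗ[k] R}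
    (hσ : IsNormalized2 k H R σ) (h : conv2 k H R σ σ' = convUnit2 k H R) :
    IsNormalized2 k H R σ' := by
  replace h : toConv σ * toConv σ' = 1 := WithConv.ext h
  rw [isNormalized2_iff] at hσ ⊢
  have h₁ := congrArg (includeLeftCoalgHom k H).precompConv h
  have h₂ := congrArg (includeRightCoalgHom k H).precompConv h
  rw [map_mul, map_one, hσ.1, one_mul] at h₁
  rw [map_mul, map_one, hσ.2, one_mul] at h₂
  exact ⟨h₁, h₂⟩

lemma isLazy2_iff_comp_comul (σ : H ⊗[k] H →ₗ[k] R) :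
    IsLazy2 k H R σ ↔
      map σ (LinearMap.mul' k H) ∘ₗ comul (R := k) (A := H ⊗[k] H) =
        map σ (LinearMap.mul' k H) ∘ₗ
          (TensorProduct.comm k (H ⊗[k] H) (H ⊗[k] H)).toLinearMap ∘ₗ
            comul (R := k) (A := H ⊗[k] H) :=
  ⟨fun h => TensorProduct.ext' h, fun h x y => LinearMap.congr_fun h (x ⊗ₜ y)⟩

variable (k H R) in
noncomputable def mulIncludeRight : WithConv (H ⊗[k] H →ₗ[k] R ⊗[k] H) :=
  toConv (Algebra.TensorProduct.includeRight.toLinearMap ∘ₗ LinearMap.mul' k H)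

lemma isLazy2_iff_commute (σ : H ⊗[k] H →ₗ[k] R) :
    IsLazy2 k H R σ ↔
      Commute ((Algebra.TensorProduct.includeLeft (S := k)).postcompConv (toConv σ))
        (mulIncludeRight k H R) := by
  have h₁ : LinearMap.mul' k (R ⊗[k] H) ∘ₗ
      map ((Algebra.TensorProduct.includeLeft (S := k)).toLinearMap ∘ₗ σ)
        (Algebra.TensorProduct.includeRight.toLinearMap ∘ₗ LinearMap.mul' k H) =
      map σ (LinearMap.mul' k H) := by
    ext; simp
  have h₂ : LinearMap.mul' k (R ⊗[k] H) ∘ₗ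
      map (Algebra.TensorProduct.includeRight.toLinearMap ∘ₗ LinearMap.mul' k H)
        ((Algebra.TensorProduct.includeLeft (S := k)).toLinearMap ∘ₗ σ) =
      map σ (LinearMap.mul' k H) ∘ₗ (TensorProduct.comm k (H ⊗[k] H) (H ⊗[k] H)).toLinearMap := by
    ext; simp
  rw [isLazy2_iff_comp_comul, commute_iff_eq, WithConv.ext_iff, ← LinearMap.comp_assoc, ← h₂,
    ← h₁]
  rfl

lemma isLazy2_conv2 {σ τ : H ⊗[k] H →ₗ[k] R} (hσ : IsLazy2 k H R σ)
    (hτ : IsLazy2 k H R τ) : IsLazy2 k H R (conv2 k H R σ τ) := by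
  rw [isLazy2_iff_commute] at hσ hτ ⊢
  rw [conv2_eq, toConv_ofConv, map_mul]
  exact hσ.mul_left hτ

lemma isLazy2_convUnit2 : IsLazy2 k H R (convUnit2 k H R) := by
  rw [isLazy2_iff_commute, convUnit2_eq, toConv_ofConv, map_one]
  exact Commute.one_left _

lemma isLazy2_of_conv2_eq_convUnit2 {σ σ' : H ⊗[k] H →ₗ[k] R} (hσ : IsLazy2 k H R σ)
    (h : conv2 k H R σ σ' = convUnit2 k H R) (h' : conv2 k H R σ' σ = convUnit2 k H R) :
    IsLazy2 k H R σ' := by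
  rw [isLazy2_iff_commute] at hσ ⊢
  let u : (WithConv (H ⊗[k] H →ₗ[k] R))ˣ :=
    ⟨toConv σ, toConv σ', WithConv.ext h, WithConv.ext h'⟩
  exact Commute.units_inv_left
    (u := Units.map (Algebra.TensorProduct.includeLeft (S := k)).postcompConv u) hσ

lemma IsLazy2.commute_fst_mulFirstTwo {τ : H ⊗[k] H →ₗ[k] R} (hτ : IsLazy2 k H R τ)
    (σ : H ⊗[k] H →ₗ[k] R) :
    Commute ((fst k (H ⊗[k] H) H).precompConv (toConv τ))
      ((mulFirstTwo k H).precompConv (toConv σ)) := by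
  rw [isLazy2_iff_comp_comul] at hτ
  let Ψ : (R ⊗[k] H) ⊗[k] H →ₗ[k] R :=
    LinearMap.mul' k R ∘ₗ σ.lTensor R ∘ₗ (TensorProduct.assoc k R H H).toLinearMap
  have h₁ : LinearMap.mul' k R ∘ₗ map τ (σ ∘ₗ (mulFirstTwo k H).toLinearMap) ∘ₗ
      (TensorProduct.assoc k (H ⊗[k] H) (H ⊗[k] H) H).toLinearMap =
      Ψ ∘ₗ (map τ (LinearMap.mul' k H)).rTensor H := by
    ext; simp [Ψ, mulFirstTwo]
  have h₂ : LinearMap.mul' k R ∘ₗ map (σ ∘ₗ (mulFirstTwo k H).toLinearMap) τ ∘ₗ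
      (TensorProduct.rightComm k (H ⊗[k] H) (H ⊗[k] H) H).toLinearMap =
      Ψ ∘ₗ (map τ (LinearMap.mul' k H) ∘ₗ
        (TensorProduct.comm k (H ⊗[k] H) (H ⊗[k] H)).toLinearMap).rTensor H := by
    ext; simp [Ψ, mulFirstTwo, mul_comm]
  have hτ_Ψ := congrArg (fun F => Ψ ∘ₗ F.rTensor H) hτ
  rw [commute_iff_eq, WithConv.ext_iff, fst_precompConv_mul, mul_fst_precompConv]
  calc _ = (Ψ ∘ₗ (map τ (LinearMap.mul' k H)).rTensor H) ∘ₗ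
        (comul (R := k) (A := H ⊗[k] H)).rTensor H := by
        rw [← h₁]; rfl
    _ = (Ψ ∘ₗ (map τ (LinearMap.mul' k H) ∘ₗ
        (TensorProduct.comm k (H ⊗[k] H) (H ⊗[k] H)).toLinearMap).rTensor H) ∘ₗ
          (comul (R := k) (A := H ⊗[k] H)).rTensor H := by
        simpa only [LinearMap.rTensor_comp, LinearMap.comp_assoc] using hτ_Ψ
    _ = _ := by rw [← h₂]; rfl

lemma IsLazy2.commute_snd_mulLastTwo {τ : H ⊗[k] H →ₗ[k] R} (hτ : IsLazy2 k H R τ)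
    (σ : H ⊗[k] H →ₗ[k] R) :
    Commute ((snd k (H ⊗[k] H) H).precompConv (toConv τ))
      ((mulLastTwo k H).precompConv (toConv σ)) := by
  rw [isLazy2_iff_comp_comul] at hτ
  let Ψ : H ⊗[k] (R ⊗[k] H) →ₗ[k] R :=
    LinearMap.mul' k R ∘ₗ σ.lTensor R ∘ₗ (TensorProduct.leftComm k H R H).toLinearMap
  have h₁ : LinearMap.mul' k R ∘ₗ map τ (σ ∘ₗ (mulLastTwo k H).toLinearMap) ∘ₗ
      (TensorProduct.leftComm k H (H ⊗[k] H) (H ⊗[k] H)).toLinearMap =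
      Ψ ∘ₗ (map τ (LinearMap.mul' k H)).lTensor H := by
    ext; simp [Ψ, mulLastTwo]
  have h₂ : LinearMap.mul' k R ∘ₗ map (σ ∘ₗ (mulLastTwo k H).toLinearMap) τ ∘ₗ
      (TensorProduct.assoc k H (H ⊗[k] H) (H ⊗[k] H)).symm.toLinearMap =
      Ψ ∘ₗ (map τ (LinearMap.mul' k H) ∘ₗ
        (TensorProduct.comm k (H ⊗[k] H) (H ⊗[k] H)).toLinearMap).lTensor H := by
    ext; simp [Ψ, mulLastTwo, mul_comm]
  have hτ_Ψ := congrArg (fun F => Ψ ∘ₗ F.lTensor H) hτ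
  rw [commute_iff_eq, WithConv.ext_iff, snd_precompConv_mul, mul_snd_precompConv]
  calc _ = (Ψ ∘ₗ (map τ (LinearMap.mul' k H)).lTensor H) ∘ₗ
        (comul (R := k) (A := H ⊗[k] H)).lTensor H := by
        rw [← h₁]; rfl
    _ = (Ψ ∘ₗ (map τ (LinearMap.mul' k H) ∘ₗ
        (TensorProduct.comm k (H ⊗[k] H) (H ⊗[k] H)).toLinearMap).lTensor H) ∘ₗ
          (comul (R := k) (A := H ⊗[k] H)).lTensor H := by
        simpa only [LinearMap.lTensor_comp, LinearMap.comp_assoc] using hτ_Ψ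
    _ = _ := by rw [← h₂]; rfl

lemma isCocycle_iff (σ : H ⊗[k] H →ₗ[k] R) :
    IsCocycle k H R σ ↔
      (fst k (H ⊗[k] H) H).precompConv (toConv σ) * (mulFirstTwo k H).precompConv (toConv σ) =
        ((snd k (H ⊗[k] H) H).comp (Coalgebra.TensorProduct.assoc k k H H H).toCoalgHom
            ).precompConv (toConv σ) *
          ((mulLastTwo k H).comp (Coalgebra.TensorProduct.assoc k k H H H).toCoalgHom
            ).precompConv (toConv σ) := by
  have hL : ((fst k (H ⊗[k] H) H).precompConv (toConv σ) *
      (mulFirstTwo k H).precompConv (toConv σ)).ofConv = cocycleLHS k H R σ :=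
    fst_precompConv_mul _ _
  have hR : ((snd k (H ⊗[k] H) H).precompConv (toConv σ) *
      (mulLastTwo k H).precompConv (toConv σ)).ofConv = cocycleRHS k H R σ :=
    snd_precompConv_mul _ _
  rw [CoalgHom.precompConv_comp, CoalgHom.precompConv_comp, ← map_mul, WithConv.ext_iff, hL]
  change _ ↔ _ = (_ : WithConv (H ⊗[k] (H ⊗[k] H) →ₗ[k] R)).ofConv ∘ₗ _
  rw [hR]
  exact ⟨fun h => TensorProduct.ext_threefold h, fun h x y z => LinearMap.congr_fun h _⟩

lemma isCocycle_conv2 {σ τ : H ⊗[k] H →ₗ[k] R} (hσ : IsCocycle k H R σ)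
    (hτ : IsCocycle k H R τ) (hτ_lazy : IsLazy2 k H R τ) :
    IsCocycle k H R (conv2 k H R σ τ) := by
  rw [isCocycle_iff] at hσ hτ ⊢
  exact cocycle_equation_mul _ _ _ _ hσ hτ (hτ_lazy.commute_fst_mulFirstTwo σ)
    ((hτ_lazy.commute_snd_mulLastTwo σ).map
      (Coalgebra.TensorProduct.assoc k k H H H).toCoalgHom.precompConv)

lemma isCocycle_convUnit2 : IsCocycle k H R (convUnit2 k H R) := by
  rw [isCocycle_iff, convUnit2_eq, toConv_ofConv]
  simp only [map_one]

lemma isCocycle_of_conv2_eq_convUnit2 {σ σ' : H ⊗[k] H →ₗ[k] R} (hσ : IsCocycle k H R σ)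
    (hσ'_lazy : IsLazy2 k H R σ') (h : conv2 k H R σ σ' = convUnit2 k H R)
    (h' : conv2 k H R σ' σ = convUnit2 k H R) : IsCocycle k H R σ' := by
  rw [isCocycle_iff] at hσ ⊢
  exact cocycle_equation_of_mul_eq_one _ _ _ _ hσ (WithConv.ext h) (WithConv.ext h')
    (hσ'_lazy.commute_fst_mulFirstTwo σ')
    ((hσ'_lazy.commute_snd_mulLastTwo σ').map
      (Coalgebra.TensorProduct.assoc k k H H H).toCoalgHom.precompConv)

lemma memZ2ℓ_conv2 {σ τ : H ⊗[k] H →ₗ[k] R} (hσ : MemZ2ℓ k H R σ) (hτ : MemZ2ℓ k H R τ) :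
    MemZ2ℓ k H R (conv2 k H R σ τ) := by
  obtain ⟨hσ_inv, hσ_norm, hσ_lazy, hσ_cocycle⟩ := hσ
  obtain ⟨hτ_inv, hτ_norm, hτ_lazy, hτ_cocycle⟩ := hτ
  rw [isConvInvertible2_iff_isUnit] at hσ_inv hτ_inv
  exact ⟨(isConvInvertible2_iff_isUnit _).2 (hσ_inv.mul hτ_inv),
    isNormalized2_conv2 hσ_norm hτ_norm, isLazy2_conv2 hσ_lazy hτ_lazy,
    isCocycle_conv2 hσ_cocycle hτ_cocycle hτ_lazy⟩

lemma memZ2ℓ_convUnit2 : MemZ2ℓ k H R (convUnit2 k H R) :=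
  ⟨(isConvInvertible2_iff_isUnit _).2 isUnit_one, isNormalized2_convUnit2, isLazy2_convUnit2,
    isCocycle_convUnit2⟩

lemma memZ2ℓ_of_conv2_eq_convUnit2 {σ σ' : H ⊗[k] H →ₗ[k] R} (hσ : MemZ2ℓ k H R σ)
    (h : conv2 k H R σ σ' = convUnit2 k H R) (h' : conv2 k H R σ' σ = convUnit2 k H R) :
    MemZ2ℓ k H R σ' := by
  obtain ⟨-, hσ_norm, hσ_lazy, hσ_cocycle⟩ := hσ
  have hσ'_lazy := isLazy2_of_conv2_eq_convUnit2 hσ_lazy h h'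
  exact ⟨⟨σ, h', h⟩, isNormalized2_of_conv2_eq_convUnit2 hσ_norm h, hσ'_lazy,
    isCocycle_of_conv2_eq_convUnit2 hσ_cocycle hσ'_lazy h h'⟩

end LazyCocycleCriteria

/-- the convolution product of two convolution-invertible
normalized lazy left 2-cocycles is again one; in particular `Z²_ℓ(H,R)` is a
group under convolution (it contains the convolution unit, is closed under
convolution, and contains the convolution inverse of each of its elements). -/
theorem Z2ℓ_group :
    (∀ σ τ : H ⊗[k] H →ₗ[k] R, MemZ2ℓ k H R σ → MemZ2ℓ k H R τ →
      MemZ2ℓ k H R (conv2 k H R σ τ)) ∧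
    MemZ2ℓ k H R (convUnit2 k H R) ∧
    (∀ σ σ' : H ⊗[k] H →ₗ[k] R, MemZ2ℓ k H R σ →
      conv2 k H R σ σ' = convUnit2 k H R →
      conv2 k H R σ' σ = convUnit2 k H R → MemZ2ℓ k H R σ') :=
  ⟨fun _ _ => memZ2ℓ_conv2, memZ2ℓ_convUnit2, fun _ _ => memZ2ℓ_of_conv2_eq_convUnit2⟩

end LazyCocycles
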